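/- arXiv:1808.08116 — 3 statements merged into one kernel-verified Lean document; each statement's English description precedes it below -/
import Mathlib

section
/- Fix L ≥ 2, c, β, ω̄ > 0, φ_0 ∈ ℝ, and for l = 1,…,L−1 angles φ_l, ψ_l ∈ ℝ with Δ_l = φ_l − ψ_l and cos Δ_l ≠ −1; fix d > 0, d_{U,l}, d_{K,l} > 0, path powers P_0,…,P_{L−1} > 0, and positive reals s_{U,0}, s_{K,0}, s_{U,l}, s_{K,l}. For l ≥ 1 let f_l = [ (c²(1 + cos Δ_l)²/ω̄²)(d_{K,l}²/s_{K,l} + d_{U,l}²/s_{U,l}) + (c²/β²) sin² Δ_l ]^{−1}. Define the downlink matrix F ∈ ℝ^{3×3} (unknown node U is the receiver, per Theorem 1): F = P_0 (ω̄²/(c² d²)) ( s_{K,0} a aᵀ + s_{U,0} b bᵀ ) + Σ_{l≥1} P_l f_l z_l z_lᵀ − (1/K) w wᵀ, with a = (u_⊥(φ_0), 0), b = (u_⊥(φ_0), −d), z_l = (u_⊥(ψ_l) + u_⊥(φ_l) + sin(Δ_l) u(φ_0), −(1 + cos Δ_l) d_{U,l}), w = Σ_{l≥1} P_l sin(Δ_l)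 f_l z_l, K = P_0 β²/c² + Σ_{l≥1} P_l sin²(Δ_l) f_l. Define the uplink matrix G ∈ ℝ^{3×3} (U is the transmitter, per Theorem 2) by the same construction with the roles interchanged: with Δ'_l = ψ_l − φ_l, f'_l = [ (c²(1 + cos Δ'_l)²/ω̄²)(d_{U,l}²/s_{U,l} + d_{K,l}²/s_{K,l}) + (c²/β²) sin² Δ'_l ]^{−1}, G = P_0 (ω̄²/(c² d²)) ( s_{U,0} b bᵀ + s_{K,0} a aᵀ ) + Σ_{l≥1} P_l f'_l z'_l z'_lᵀ − (1/K') w' w'ᵀ, with z'_l = (u_⊥(φ_l) + u_⊥(ψ_l) − sin(Δ'_l) u(φ_0), −(1 + cos Δ'_l) d_{U,l}), w' = Σ_{l≥1} P_l sin(Δ'_l) f'_l z'_l, K' = P_0 β²/c² + Σ_{l≥1} P_l sin²(Δ'_l) f'_l. Then F = G. Consequently, scaling by the receive-SNR factors δ_DL, δ_UL > 0, the downlink and uplink position-and-orientation equivalent Fisher information matrices δ_DL F and δ_UL G differ only by the scalar δ_UL/δ_DL. -/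
/-!
Reversing the link replaces every angle difference `Δ_l = φ_l − ψ_l` by `−Δ_l`. Cosine is even
and sine is odd, so the intensities `f_l`, the directions `z_l` (whose `sin Δ_l · u(φ_0)` term
enters with the opposite sign) and the scalar `K` are unchanged, while the coupling vector `w`
only changes sign, which the rank-one correction `w wᵀ / K` does not see.
-/

open Real Matrix Finset

noncomputable section

def uv (θ : ℝ) : Fin 2 → ℝ := ![Real.cos θ, Real.sin θ]

theorem Matrix.vecMulVec_neg_neg {m n α : Type*} [Mul α] [HasDistribNeg α]
    (w : m → α) (v : n → α) : vecMulVec (-w) (-v) = vecMulVec w v := by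
  rw [neg_vecMulVec, vecMulVec_neg, neg_neg]

theorem downlink_uplink_duality_general (L : ℕ)
    (c0 β ωbar : ℝ)
    (φ0 : ℝ) (φ ψ : ℕ → ℝ)
    (d : ℝ)
    (dU dK : ℕ → ℝ)
    (P : ℕ → ℝ)
    (sU sK : ℕ → ℝ)
    -- the NLOS information intensities, downlink and uplink
    (f f' : ℕ → ℝ)
    (hf : ∀ l, f l = ((c0 ^ 2 * (1 + Real.cos (φ l - ψ l)) ^ 2 / ωbar ^ 2)
        * (dK l ^ 2 / sK l + dU l ^ 2 / sU l)
        + (c0 ^ 2 / β ^ 2) * Real.sin (φ l - ψ l) ^ 2)⁻¹)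
    (hf' : ∀ l, f' l = ((c0 ^ 2 * (1 + Real.cos (ψ l - φ l)) ^ 2 / ωbar ^ 2)
        * (dU l ^ 2 / sU l + dK l ^ 2 / sK l)
        + (c0 ^ 2 / β ^ 2) * Real.sin (ψ l - φ l) ^ 2)⁻¹)
    -- the information directions
    (a b : Fin 3 → ℝ)
    (z z' : ℕ → Fin 3 → ℝ)
    (hz : ∀ l, z l = ![Real.sin (ψ l) + Real.sin (φ l)
          + Real.sin (φ l - ψ l) * Real.cos φ0,
        -Real.cos (ψ l) + -Real.cos (φ l) + Real.sin (φ l - ψ l) * Real.sin φ0,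
        -(1 + Real.cos (φ l - ψ l)) * dU l])
    (hz' : ∀ l, z' l = ![Real.sin (φ l) + Real.sin (ψ l)
          - Real.sin (ψ l - φ l) * Real.cos φ0,
        -Real.cos (φ l) + -Real.cos (ψ l) - Real.sin (ψ l - φ l) * Real.sin φ0,
        -(1 + Real.cos (ψ l - φ l)) * dU l])
    -- the coupling terms
    (w w' : Fin 3 → ℝ) (K K' : ℝ)
    (hw : w = ∑ l ∈ Ico 1 L, (P l * Real.sin (φ l - ψ l) * f l) • z l)
    (hK : K = P 0 * β ^ 2 / c0 ^ 2 + ∑ l ∈ Ico 1 L, P l * Real.sin (φ l - ψ l) ^ 2 * f l)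
    (hw' : w' = ∑ l ∈ Ico 1 L, (P l * Real.sin (ψ l - φ l) * f' l) • z' l)
    (hK' : K' = P 0 * β ^ 2 / c0 ^ 2
      + ∑ l ∈ Ico 1 L, P l * Real.sin (ψ l - φ l) ^ 2 * f' l)
    -- downlink and uplink bracketed EFIMs
    (F G : Matrix (Fin 3) (Fin 3) ℝ)
    (hF : F = (P 0 * (ωbar ^ 2 / (c0 ^ 2 * d ^ 2)))
        • (sK 0 • vecMulVec a a + sU 0 • vecMulVec b b)
      + ∑ l ∈ Ico 1 L, (P l * f l) • vecMulVec (z l) (z l)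
      - K⁻¹ • vecMulVec w w)
    (hG : G = (P 0 * (ωbar ^ 2 / (c0 ^ 2 * d ^ 2)))
        • (sU 0 • vecMulVec b b + sK 0 • vecMulVec a a)
      + ∑ l ∈ Ico 1 L, (P l * f' l) • vecMulVec (z' l) (z' l)
      - K'⁻¹ • vecMulVec w' w') :
    F = G ∧ ∀ δDL δUL : ℝ, 0 < δDL → 0 < δUL →
      δUL • G = (δUL / δDL) • (δDL • F) := by
  have hcos : ∀ l, cos (ψ l - φ l) = cos (φ l - ψ l) := fun l => by rw [← neg_sub, cos_neg]
  have hsin : ∀ l, sin (ψ l - φ l) = -sin (φ l - ψ l) := fun l => by rw [← neg_sub, sin_neg]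
  have hff : f' = f := funext fun l => by
    rw [hf, hf', hcos, hsin, neg_sq, add_comm (dU l ^ 2 / sU l)]
  have hzz : z' = z := funext fun l => by
    rw [hz, hz', hcos, hsin]
    ext i
    fin_cases i <;>
      simp only [Fin.zero_eta, Fin.mk_one, Fin.reduceFinMk, Fin.isValue, Matrix.cons_val,
        cons_val_zero, cons_val_one] <;>
      ring
  have hww : w' = -w := by
    rw [hw, hw', hff, hzz, ← sum_neg_distrib]
    refine sum_congr rfl fun l _ => ?_
    rw [hsin, ← neg_smul, mul_neg, neg_mul]
  have hKK : K' = K := by simp only [hK, hK', hff, hsin, neg_sq]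
  have hFG : F = G := by
    rw [hF, hG, hff, hzz, hww, hKK, vecMulVec_neg_neg, add_comm (sK 0 • _)]
  exact ⟨hFG, fun δDL δUL hDL _ => by rw [hFG, smul_smul, div_mul_cancel₀ _ hDL.ne']⟩

/-- Downlink/uplink duality of single-anchor positioning (Section V of the paper):
the bracketed asymptotic position-and-orientation EFIM `F` of Theorem 1 (downlink:
the unknown node `U` is the receiver) and the EFIM `G` of Theorem 2 (uplink: `U` is
the transmitter) coincide, so the downlink and uplink EFIMs `δ_DL F` and `δ_UL G`
differ only by the scalar ratio `δ_UL/δ_DL` of the receive SNRs.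
Here `φ₀` is the bearing from `U` to the known node `K`, `φ_l, ψ_l` the bearings
from `U` resp. `K` to the `l`-th scatterer, `Δ_l = φ_l − ψ_l`, `Δ'_l = ψ_l − φ_l`,
`d, d_{U,l}, d_{K,l}` distances, `P_l` path powers, `β` the effective baseband
bandwidth, `ω̄` the effective angular carrier frequency, and `s_{U,l}, s_{K,l}` the
squared-array-aperture-function values. -/
theorem downlink_uplink_duality (L : ℕ) (hL : 2 ≤ L)
    (c0 β ωbar : ℝ) (hc : 0 < c0) (hβ : 0 < β) (hω : 0 < ωbar)
    (φ0 : ℝ) (φ ψ : ℕ → ℝ)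
    (hΔ : ∀ l, 1 ≤ l → l < L → Real.cos (φ l - ψ l) ≠ -1)
    (d : ℝ) (hd : 0 < d)
    (dU dK : ℕ → ℝ)
    (hdU : ∀ l, 1 ≤ l → l < L → 0 < dU l) (hdK : ∀ l, 1 ≤ l → l < L → 0 < dK l)
    (P : ℕ → ℝ) (hP : ∀ l, l < L → 0 < P l)
    (sU sK : ℕ → ℝ) (hsU : ∀ l, l < L → 0 < sU l) (hsK : ∀ l, l < L → 0 < sK l)
    -- the NLOS information intensities, downlink and uplink
    (f f' : ℕ → ℝ)
    (hf : ∀ l, f l = ((c0 ^ 2 * (1 + Real.cos (φ l - ψ l)) ^ 2 / ωbar ^ 2)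
        * (dK l ^ 2 / sK l + dU l ^ 2 / sU l)
        + (c0 ^ 2 / β ^ 2) * Real.sin (φ l - ψ l) ^ 2)⁻¹)
    (hf' : ∀ l, f' l = ((c0 ^ 2 * (1 + Real.cos (ψ l - φ l)) ^ 2 / ωbar ^ 2)
        * (dU l ^ 2 / sU l + dK l ^ 2 / sK l)
        + (c0 ^ 2 / β ^ 2) * Real.sin (ψ l - φ l) ^ 2)⁻¹)
    -- the information directions
    (a b : Fin 3 → ℝ)
    (ha : a = ![Real.sin φ0, -Real.cos φ0, 0])
    (hb : b = ![Real.sin φ0, -Real.cos φ0, -d])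
    (z z' : ℕ → Fin 3 → ℝ)
    (hz : ∀ l, z l = ![Real.sin (ψ l) + Real.sin (φ l)
          + Real.sin (φ l - ψ l) * Real.cos φ0,
        -Real.cos (ψ l) + -Real.cos (φ l) + Real.sin (φ l - ψ l) * Real.sin φ0,
        -(1 + Real.cos (φ l - ψ l)) * dU l])
    (hz' : ∀ l, z' l = ![Real.sin (φ l) + Real.sin (ψ l)
          - Real.sin (ψ l - φ l) * Real.cos φ0,
        -Real.cos (φ l) + -Real.cos (ψ l) - Real.sin (ψ l - φ l) * Real.sin φ0,
        -(1 + Real.cos (ψ l - φ l)) * dU l])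
    -- the coupling terms
    (w w' : Fin 3 → ℝ) (K K' : ℝ)
    (hw : w = ∑ l ∈ Ico 1 L, (P l * Real.sin (φ l - ψ l) * f l) • z l)
    (hK : K = P 0 * β ^ 2 / c0 ^ 2 + ∑ l ∈ Ico 1 L, P l * Real.sin (φ l - ψ l) ^ 2 * f l)
    (hw' : w' = ∑ l ∈ Ico 1 L, (P l * Real.sin (ψ l - φ l) * f' l) • z' l)
    (hK' : K' = P 0 * β ^ 2 / c0 ^ 2
      + ∑ l ∈ Ico 1 L, P l * Real.sin (ψ l - φ l) ^ 2 * f' l)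
    -- downlink and uplink bracketed EFIMs
    (F G : Matrix (Fin 3) (Fin 3) ℝ)
    (hF : F = (P 0 * (ωbar ^ 2 / (c0 ^ 2 * d ^ 2)))
        • (sK 0 • vecMulVec a a + sU 0 • vecMulVec b b)
      + ∑ l ∈ Ico 1 L, (P l * f l) • vecMulVec (z l) (z l)
      - K⁻¹ • vecMulVec w w)
    (hG : G = (P 0 * (ωbar ^ 2 / (c0 ^ 2 * d ^ 2)))
        • (sU 0 • vecMulVec b b + sK 0 • vecMulVec a a)
      + ∑ l ∈ Ico 1 L, (P l * f' l) • vecMulVec (z' l) (z' l)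
      - K'⁻¹ • vecMulVec w' w') :
    F = G ∧ ∀ δDL δUL : ℝ, 0 < δDL → 0 < δUL →
      δUL • G = (δUL / δDL) • (δDL • F) :=
  downlink_uplink_duality_general L c0 β ωbar φ0 φ ψ d dU dK P sU sK f f' hf hf' a b z z' hz hz' w
    w' K K' hw hK hw' hK' F G hF hG
end
end

section
/- Let θ_T, θ_R ∈ ℝ, Δθ = θ_R − θ_T, and A, B, E > 0 with A (1 + cos Δθ)² (B + E) + B E sin² Δθ ≠ 0. Define J_s = A (u(θ_T) + u(θ_R))(u(θ_T) + u(θ_R))ᵀ + B u_⊥(θ_T) u_⊥(θ_T)ᵀ + E u_⊥(θ_R) u_⊥(θ_R)ᵀ ∈ ℝ^{2×2}. Then J_s is invertible and J_s^{−1} = (1/det J_s) [ A (u_⊥(θ_T) + u_⊥(θ_R))(u_⊥(θ_T) + u_⊥(θ_R))ᵀ + B u(θ_T) u(θ_T)ᵀ + E u(θ_R) u(θ_R)ᵀ ], where det J_s = A (1 + cos Δθ)² (B + E) + B E sin² Δθ. -/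
/-!
For `2 × 2` matrices the adjugate is linear and sends `v wᵀ` to `(ρ w)(ρ v)ᵀ`, where `ρ` is the
quarter turn `(x, y) ↦ (y, -x)`. Since `ρ u(θ) = u_⊥(θ)` and `ρ u_⊥(θ) = -u(θ)`, the adjugate of
`J_s` is the bracketed combination, and `J_s⁻¹ = (det J_s)⁻¹ • adj J_s`. The determinant comes from
the planar Cauchy–Binet formula `det (∑ cᵢ vᵢ vᵢᵀ) = ∑_{i<j} cᵢ cⱼ (vᵢ × vⱼ)²`, the cross products
here being `-(1 + cos Δθ)` (twice) and `-sin Δθ`.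
-/

open Matrix Real

noncomputable section

def uperp (θ : ℝ) : Fin 2 → ℝ := ![Real.sin θ, -Real.cos θ]

section RotCW

variable {R : Type*} [CommRing R]

def rotCW (v : Fin 2 → R) : Fin 2 → R := ![v 1, -v 0]

theorem rotCW_add (v w : Fin 2 → R) : rotCW (v + w) = rotCW v + rotCW w := by
  ext i
  fin_cases i <;> simp [rotCW, add_comm]

theorem Matrix.adjugate_fin_two_add (M N : Matrix (Fin 2) (Fin 2) R) :
    (M + N).adjugate = M.adjugate + N.adjugate := by
  ext i j
  fin_cases i <;> fin_cases j <;> simp [adjugate_fin_two, add_comm]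

theorem Matrix.adjugate_fin_two_smul (r : R) (M : Matrix (Fin 2) (Fin 2) R) :
    (r • M).adjugate = r • M.adjugate := by
  simp [adjugate_smul]

theorem Matrix.adjugate_vecMulVec_fin_two (v w : Fin 2 → R) :
    (vecMulVec v w).adjugate = vecMulVec (rotCW w) (rotCW v) := by
  ext i j
  fin_cases i <;> fin_cases j <;> simp [adjugate_fin_two, vecMulVec_apply, rotCW, mul_comm]

-- `u ⬝ᵥ rotCW v` is the planar cross product `u × v`.
theorem Matrix.det_fin_two_smul_vecMulVec_self_add (a b c : R) (u v w : Fin 2 → R) :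
    (a • vecMulVec u u + b • vecMulVec v v + c • vecMulVec w w).det =
      a * b * (u ⬝ᵥ rotCW v) ^ 2 + a * c * (u ⬝ᵥ rotCW w) ^ 2 + b * c * (v ⬝ᵥ rotCW w) ^ 2 := by
  simp only [det_fin_two, add_apply, smul_apply, vecMulVec_apply, smul_eq_mul, dotProduct, rotCW,
    Fin.sum_univ_two, cons_val_zero, cons_val_one, cons_val_fin_one]
  ring

end RotCW

theorem uperp_eq_rotCW_uv (θ : ℝ) : uperp θ = rotCW (uv θ) := by
  ext i
  fin_cases i <;> simp [uperp, uv, rotCW]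

theorem rotCW_uperp (θ : ℝ) : rotCW (uperp θ) = -uv θ := by
  ext i
  fin_cases i <;> simp [uperp, uv, rotCW]

theorem uv_dotProduct_uv (α β : ℝ) : uv α ⬝ᵥ uv β = cos (α - β) := by
  simp [uv, dotProduct, Fin.sum_univ_two, cos_sub]

theorem uperp_dotProduct_uv (α β : ℝ) : uperp α ⬝ᵥ uv β = sin (α - β) := by
  simp only [dotProduct, uperp, uv, Fin.sum_univ_two, cons_val_zero, cons_val_one,
    cons_val_fin_one, sin_sub]
  ring

theorem det_scatterer_block (θT θR A B E : ℝ) :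
    (A • vecMulVec (uv θT + uv θR) (uv θT + uv θR)
        + B • vecMulVec (uperp θT) (uperp θT)
        + E • vecMulVec (uperp θR) (uperp θR)).det
      = A * (1 + cos (θR - θT)) ^ 2 * (B + E) + B * E * sin (θR - θT) ^ 2 := by
  rw [det_fin_two_smul_vecMulVec_self_add, rotCW_uperp, rotCW_uperp]
  simp only [dotProduct_neg, add_dotProduct, uv_dotProduct_uv, uperp_dotProduct_uv, sub_self,
    cos_zero, neg_sq]
  rw [← neg_sub θR θT, cos_neg, sin_neg]
  ring

theorem adjugate_scatterer_block (θT θR A B E : ℝ) :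
    (A • vecMulVec (uv θT + uv θR) (uv θT + uv θR)
        + B • vecMulVec (uperp θT) (uperp θT)
        + E • vecMulVec (uperp θR) (uperp θR)).adjugate
      = A • vecMulVec (uperp θT + uperp θR) (uperp θT + uperp θR)
        + B • vecMulVec (uv θT) (uv θT)
        + E • vecMulVec (uv θR) (uv θR) := by
  simp only [adjugate_fin_two_add, adjugate_fin_two_smul, adjugate_vecMulVec_fin_two, rotCW_add,
    ← uperp_eq_rotCW_uv, rotCW_uperp, neg_vecMulVec, vecMulVec_neg, neg_neg]

theorem inv_scatterer_block_general (θT θR A B E : ℝ)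
    (hdet : A * (1 + Real.cos (θR - θT)) ^ 2 * (B + E)
        + B * E * Real.sin (θR - θT) ^ 2 ≠ 0) :
    IsUnit (A • vecMulVec (uv θT + uv θR) (uv θT + uv θR)
        + B • vecMulVec (uperp θT) (uperp θT)
        + E • vecMulVec (uperp θR) (uperp θR)) ∧
    (A • vecMulVec (uv θT + uv θR) (uv θT + uv θR)
        + B • vecMulVec (uperp θT) (uperp θT)
        + E • vecMulVec (uperp θR) (uperp θR)).det
      = A * (1 + Real.cos (θR - θT)) ^ 2 * (B + E)
        + B * E * Real.sin (θR - θT) ^ 2 ∧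
    (A • vecMulVec (uv θT + uv θR) (uv θT + uv θR)
        + B • vecMulVec (uperp θT) (uperp θT)
        + E • vecMulVec (uperp θR) (uperp θR))⁻¹
      = ((A • vecMulVec (uv θT + uv θR) (uv θT + uv θR)
        + B • vecMulVec (uperp θT) (uperp θT)
        + E • vecMulVec (uperp θR) (uperp θR)).det)⁻¹ •
        (A • vecMulVec (uperp θT + uperp θR) (uperp θT + uperp θR)
          + B • vecMulVec (uv θT) (uv θT)
          + E • vecMulVec (uv θR) (uv θR)) := by
  refine ⟨?_, det_scatterer_block θT θR A B E, ?_⟩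
  · rw [isUnit_iff_isUnit_det, det_scatterer_block]
    exact hdet.isUnit
  · rw [inv_def, Ring.inverse_eq_inv', adjugate_scatterer_block]

/-- Inverse of the per-scatterer nuisance Fisher information block
`J_s = A (u(θ_T)+u(θ_R))(u(θ_T)+u(θ_R))ᵀ + B u_⊥(θ_T)u_⊥(θ_T)ᵀ + E u_⊥(θ_R)u_⊥(θ_R)ᵀ`:
it is invertible, its determinant is
`A (1+cos Δθ)²(B+E) + B E sin² Δθ`, and its inverse is the analogous combination with
each unit vector replaced by its orthogonal rotation, divided by the determinant. -/
theorem inv_scatterer_block (θT θR A B E : ℝ) (hA : 0 < A) (hB : 0 < B) (hE : 0 < E)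
    (hdet : A * (1 + Real.cos (θR - θT)) ^ 2 * (B + E)
        + B * E * Real.sin (θR - θT) ^ 2 ≠ 0) :
    IsUnit (A • vecMulVec (uv θT + uv θR) (uv θT + uv θR)
        + B • vecMulVec (uperp θT) (uperp θT)
        + E • vecMulVec (uperp θR) (uperp θR)) ∧
    (A • vecMulVec (uv θT + uv θR) (uv θT + uv θR)
        + B • vecMulVec (uperp θT) (uperp θT)
        + E • vecMulVec (uperp θR) (uperp θR)).det
      = A * (1 + Real.cos (θR - θT)) ^ 2 * (B + E)
        + B * E * Real.sin (θR - θT) ^ 2 ∧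
    (A • vecMulVec (uv θT + uv θR) (uv θT + uv θR)
        + B • vecMulVec (uperp θT) (uperp θT)
        + E • vecMulVec (uperp θR) (uperp θR))⁻¹
      = ((A • vecMulVec (uv θT + uv θR) (uv θT + uv θR)
        + B • vecMulVec (uperp θT) (uperp θT)
        + E • vecMulVec (uperp θR) (uperp θR)).det)⁻¹ •
        (A • vecMulVec (uperp θT + uperp θR) (uperp θT + uperp θR)
          + B • vecMulVec (uv θT) (uv θT)
          + E • vecMulVec (uv θR) (uv θR)) :=
  inv_scatterer_block_general θT θR A B E hdet
end
end

section
/- Let n ≥ 1, m ≥ 0, u, z_1,…,z_m ∈ ℝⁿ, a_0 > 0, w_1,…,w_m ≥ 0, and s_1,…,s_m ∈ ℝ, and set K = a_0 + Σ_{l=1}^m w_l s_l² (so K > 0). Then a_0 u uᵀ + Σ_{l=1}^m w_l z_l z_lᵀ − (1/K)(a_0 u − Σ_{l=1}^m w_l s_l z_l)(a_0 u − Σ_{l=1}^m w_l s_l z_l)ᵀ = Σ_{l=1}^m w_l (z_l + s_l u)(z_l + s_l u)ᵀ − (1/K)(Σ_{l=1}^m w_l s_l (z_l + s_l u))(Σ_{l=1}^m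 w_l s_l (z_l + s_l u))ᵀ. -/
/-!
Write `A = Σ w_l s_l z_l`, `K = a₀ + Σ w_l s_l²` and `v = a₀ u − A`. Expanding by bilinearity,
`Σ w_l (z_l + s_l u)(z_l + s_l u)ᵀ = Σ w_l z_l z_lᵀ + A uᵀ + u Aᵀ + (K − a₀) u uᵀ`, and the no-KTT
vector is `Σ w_l s_l (z_l + s_l u) = K u − v`. Completing the square,
`K⁻¹ (K u − v)(K u − v)ᵀ = K u uᵀ − u vᵀ − v uᵀ + K⁻¹ v vᵀ`, and all the cross terms cancel,
leaving `a₀ u uᵀ + Σ w_l z_l z_lᵀ − K⁻¹ v vᵀ`.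
-/

open Matrix Finset

theorem Finset.sum_smul_add_smul {ι R M : Type*} [Semiring R] [AddCommMonoid M] [Module R M]
    (t : Finset ι) (c s : ι → R) (z : ι → M) (u : M) :
    ∑ l ∈ t, c l • (z l + s l • u) = ∑ l ∈ t, c l • z l + (∑ l ∈ t, c l * s l) • u := by
  simp only [smul_add, smul_smul, sum_add_distrib, sum_smul]

namespace Matrix

variable {ι m n R : Type*}

theorem sum_vecMulVec [NonUnitalNonAssocSemiring R] (t : Finset ι) (f : ι → m → R) (v : n → R) :
    ∑ i ∈ t, vecMulVec (f i) v = vecMulVec (∑ i ∈ t, f i) v := by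
  ext; simp [vecMulVec_apply, Matrix.sum_apply, Finset.sum_mul]

theorem vecMulVec_sum [NonUnitalNonAssocSemiring R] (t : Finset ι) (v : m → R) (f : ι → n → R) :
    ∑ i ∈ t, vecMulVec v (f i) = vecMulVec v (∑ i ∈ t, f i) := by
  ext; simp [vecMulVec_apply, Matrix.sum_apply, Finset.mul_sum]

theorem smul_vecMulVec_add_smul_self [CommSemiring R] (w s : R) (z u : m → R) :
    w • vecMulVec (z + s • u) (z + s • u) =
      w • vecMulVec z z + vecMulVec ((w * s) • z) u + vecMulVec u ((w * s) • z) +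
        (w * s ^ 2) • vecMulVec u u := by
  simp only [add_vecMulVec, vecMulVec_add, smul_vecMulVec, vecMulVec_smul]
  module

theorem sum_smul_vecMulVec_add_smul_self [CommSemiring R] (t : Finset ι) (w s : ι → R)
    (z : ι → m → R) (u : m → R) :
    ∑ l ∈ t, w l • vecMulVec (z l + s l • u) (z l + s l • u) =
      ∑ l ∈ t, w l • vecMulVec (z l) (z l) + vecMulVec (∑ l ∈ t, (w l * s l) • z l) u +
        vecMulVec u (∑ l ∈ t, (w l * s l) • z l) + (∑ l ∈ t, w l * s l ^ 2) • vecMulVec u u := by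
  simp only [smul_vecMulVec_add_smul_self, sum_add_distrib, sum_vecMulVec, vecMulVec_sum, sum_smul]

theorem inv_smul_vecMulVec_smul_sub_self [Field R] {K : R} (hK : K ≠ 0) (u v : m → R) :
    K⁻¹ • vecMulVec (K • u - v) (K • u - v) =
      K • vecMulVec u u - vecMulVec u v - vecMulVec v u + K⁻¹ • vecMulVec v v := by
  simp only [sub_vecMulVec, vecMulVec_sub, smul_vecMulVec, vecMulVec_smul, smul_sub, smul_smul,
    inv_mul_cancel₀ hK, ← mul_assoc, one_mul]
  module

end Matrix

theorem ktt_limit_matrix_identity_general (n m : ℕ)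
    (u : Fin n → ℝ) (z : ℕ → Fin n → ℝ) (a0 : ℝ) (ha0 : 0 < a0)
    (w s : ℕ → ℝ) (hw : ∀ l, 1 ≤ l → l ≤ m → 0 ≤ w l) :
    (0 < a0 + ∑ l ∈ Icc 1 m, w l * s l ^ 2) ∧
    a0 • vecMulVec u u + ∑ l ∈ Icc 1 m, w l • vecMulVec (z l) (z l)
      - (a0 + ∑ l ∈ Icc 1 m, w l * s l ^ 2)⁻¹ •
        vecMulVec (a0 • u - ∑ l ∈ Icc 1 m, (w l * s l) • z l)
                  (a0 • u - ∑ l ∈ Icc 1 m, (w l * s l) • z l)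
    = ∑ l ∈ Icc 1 m, w l • vecMulVec (z l + s l • u) (z l + s l • u)
      - (a0 + ∑ l ∈ Icc 1 m, w l * s l ^ 2)⁻¹ •
        vecMulVec (∑ l ∈ Icc 1 m, (w l * s l) • (z l + s l • u))
                  (∑ l ∈ Icc 1 m, (w l * s l) • (z l + s l • u)) := by
  have hK : 0 < a0 + ∑ l ∈ Icc 1 m, w l * s l ^ 2 :=
    add_pos_of_pos_of_nonneg ha0 <| sum_nonneg fun l hl =>
      mul_nonneg (hw l (mem_Icc.mp hl).1 (mem_Icc.mp hl).2) (sq_nonneg _)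
  refine ⟨hK, ?_⟩
  have hsum : ∑ l ∈ Icc 1 m, (w l * s l) • (z l + s l • u) =
      (a0 + ∑ l ∈ Icc 1 m, w l * s l ^ 2) • u - (a0 • u - ∑ l ∈ Icc 1 m, (w l * s l) • z l) := by
    rw [sum_smul_add_smul]
    simp only [mul_assoc, ← sq]
    module
  rw [sum_smul_vecMulVec_add_smul_self, hsum, inv_smul_vecMulVec_smul_sub_self hK.ne']
  simp only [vecMulVec_sub, sub_vecMulVec, vecMulVec_smul, smul_vecMulVec]
  module

/-- The matrix identity showing that as the clock-error variance tends to infinity,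
the EFIM with imperfect knowledge of the time of transmission coincides with the
EFIM without knowledge of the time of transmission:
`a₀ u uᵀ + Σ w_l z_l z_lᵀ − (1/K)(a₀ u − Σ w_l s_l z_l)(⋯)ᵀ
  = Σ w_l (z_l + s_l u)(z_l + s_l u)ᵀ − (1/K)(Σ w_l s_l (z_l + s_l u))(⋯)ᵀ`,
where `K = a₀ + Σ w_l s_l²`. -/
theorem ktt_limit_matrix_identity (n m : ℕ) (hn : 1 ≤ n)
    (u : Fin n → ℝ) (z : ℕ → Fin n → ℝ) (a0 : ℝ) (ha0 : 0 < a0)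
    (w s : ℕ → ℝ) (hw : ∀ l, 1 ≤ l → l ≤ m → 0 ≤ w l) :
    (0 < a0 + ∑ l ∈ Icc 1 m, w l * s l ^ 2) ∧
    a0 • vecMulVec u u + ∑ l ∈ Icc 1 m, w l • vecMulVec (z l) (z l)
      - (a0 + ∑ l ∈ Icc 1 m, w l * s l ^ 2)⁻¹ •
        vecMulVec (a0 • u - ∑ l ∈ Icc 1 m, (w l * s l) • z l)
                  (a0 • u - ∑ l ∈ Icc 1 m, (w l * s l) • z l)
    = ∑ l ∈ Icc 1 m, w l • vecMulVec (z l + s l • u) (z l + s l • u)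
      - (a0 + ∑ l ∈ Icc 1 m, w l * s l ^ 2)⁻¹ •
        vecMulVec (∑ l ∈ Icc 1 m, (w l * s l) • (z l + s l • u))
                  (∑ l ∈ Icc 1 m, (w l * s l) • (z l + s l • u)) :=
  ktt_limit_matrix_identity_general n m u z a0 ha0 w s hw
end
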